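/- arXiv:1809.01068 — 2 statements merged into one kernel-verified Lean document; each statement's English description precedes it below -/
import Mathlib

section
/- Let (E_n), n ≥ 0, be a sequence of nonempty compact subsets of ℂ and let f : ℂ → ℂ be continuous such that f(E_n) ⊇ E_{n+1} for all n ≥ 0. Then there exists ζ ∈ E_0 such that f^n(ζ) ∈ E_n for all n ≥ 0. -/
open Complex Filter Set

/-- **Lemma 2.2 (topological lemma).** If each compact set `E n` is nonempty and
`f (E n) ⊇ E (n+1)`, then some point has orbit passing through all the `E n`. -/
theorem orbit_through_compact_sets
    (E : ℕ → Set ℂ) (hne : ∀ n, (E n).Nonempty) (hcpt : ∀ n, IsCompact (E n))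
    (f : ℂ → ℂ) (hf : Continuous f)
    (hcov : ∀ n : ℕ, E (n + 1) ⊆ f '' E n) :
    ∃ ζ ∈ E 0, ∀ n : ℕ, f^[n] ζ ∈ E n := by
  set K : ℕ → Set ℂ := fun n => {z | ∀ k ≤ n, f^[k] z ∈ E k} with hK
  have hclosed : ∀ n, IsClosed (K n) := by
    intro n
    have : K n = ⋂ k ∈ Finset.range (n + 1), f^[k] ⁻¹' E k := by
      ext z
      simp [hK, Nat.lt_succ_iff]
    rw [this]
    exact isClosed_biInter fun k _ =>
      ((hcpt k).isClosed).preimage (hf.iterate k)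
  have hsub : ∀ n, K n ⊆ E 0 := fun n z hz => by simpa using hz 0 (Nat.zero_le n)
  have hKc : ∀ n, IsCompact (K n) := fun n =>
    (hcpt 0).of_isClosed_subset (hclosed n) (hsub n)
  have hmono : ∀ n, K (n + 1) ⊆ K n := fun n z hz k hk => hz k (hk.trans n.le_succ)
  have hKne : ∀ n, (K n).Nonempty := by
    have key : ∀ n, ∀ x ∈ E n, ∃ z, f^[n] z = x ∧ ∀ k ≤ n, f^[k] z ∈ E k := by
      intro n
      induction n with
      | zero => intro x hx; exact ⟨x, rfl, fun k hk => by simpa [Nat.le_zero.mp hk] using hx⟩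
      | succ n ih =>
        intro x hx
        obtain ⟨y, hy, hyx⟩ := hcov n hx
        obtain ⟨z, hz, hall⟩ := ih y hy
        refine ⟨z, by rw [Function.iterate_succ_apply', hz, hyx], fun k hk => ?_⟩
        rcases Nat.lt_succ_iff_lt_or_eq.mp (Nat.lt_succ_of_le hk) with h | h
        · exact hall k (Nat.lt_succ_iff.mp h)
        · subst h; rw [Function.iterate_succ_apply', hz, hyx]; exact hx
    intro n
    obtain ⟨x, hx⟩ := hne n
    obtain ⟨z, _, hall⟩ := key n x hx
    exact ⟨z, hall⟩
  obtain ⟨z, hz⟩ := IsCompact.nonempty_iInter_of_sequence_nonempty_isCompact_isClosed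
    K hmono hKne (hKc 0) hclosed
  simp only [mem_iInter] at hz
  exact ⟨z, by simpa using hz 0 0 le_rfl, fun n => hz n n le_rfl⟩
end

section
/- Let f : ℂ → ℂ be a transcendental entire function and let D ⊆ ℂ be an unbounded domain. Suppose there is a sequence (Σ_n) of pairwise distinct nonempty bounded open subsets of D such that min{|z| : z ∈ closure(Σ_n)} → ∞ as n → ∞, and f(closure(Σ_n)) ⊇ closure(Σ_{n+1}) for every n. Suppose further there exist strictly increasing sequences (n_j) and (m_j) of natural numbers with 0 ≤ m_j ≤ n_j for all j, m_j → ∞ as j → ∞, and f(closure(Σ_{n_j})) ⊇ closure(Σ_{m_j}) for every j. Then, for every sequence (a_n) of positive reals with a_n → ∞, there exist ζ ∈ ℂ and N ∈ ℕ such that: ζ lies in the closure of D; f^n(ζ) lies in the closure of D for all n ≥ 1; ζ ∈ I(f); ζ does not lie in the interior of I(f) (i.e. ζ ∈ J(f)); and |f^n(ζ)| ≤ a_n for all n ≥ N. -/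
open Complex Filter Set Metric Real

noncomputable section

/-- An entire function is transcendental if it is holomorphic on `ℂ` and not a polynomial. -/
def TranscendentalEntire (f : ℂ → ℂ) : Prop :=
  Differentiable ℂ f ∧ ¬∃ p : Polynomial ℂ, ∀ z, f z = p.eval z

/-- The escaping set `I(f)`. -/
def escapingSet (f : ℂ → ℂ) : Set ℂ :=
  {z : ℂ | Tendsto (fun n => ‖f^[n] z‖) atTop atTop}

/-- A (normalized) direct tract of `f`: an unbounded connected component of
`{z : |f z| > 1}` with unbounded complement. -/
def IsDirectTract (f : ℂ → ℂ) (D : Set ℂ) : Prop :=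
  (∃ z₀ ∈ D, D = connectedComponentIn {z : ℂ | 1 < ‖f z‖} z₀) ∧
  ¬Bornology.IsBounded D ∧ ¬Bornology.IsBounded Dᶜ

/-- A (normalized) logarithmic tract of `f`: a direct tract which is simply connected
and on which `f` restricts to a covering map onto `{w : |w| > 1}`. -/
def IsLogTract (f : ℂ → ℂ) (D : Set ℂ) : Prop :=
  IsDirectTract f D ∧ SimplyConnectedSpace D ∧
  ∃ hD : ∀ z ∈ D, 1 < ‖f z‖,
    IsCoveringMap (fun z : D => (⟨f (z : ℂ), hD z z.2⟩ : {w : ℂ // 1 < ‖w‖}))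

/-- The maximum modulus of `f` over points of the tract `D` of modulus `ρ`. -/
def MD (f : ℂ → ℂ) (D : Set ℂ) (ρ : ℝ) : ℝ :=
  sSup ((fun z => ‖f z‖) '' {z ∈ D | ‖z‖ = ρ})

/-- The open annulus `{z : r < |z| < R}`. -/
def ann (r R : ℝ) : Set ℂ :=
  {z : ℂ | r < ‖z‖ ∧ ‖z‖ < R}

/-!
Write `C n` for the compact set `closure (S n)`. Any index sequence `s` with
`C (s (n+1)) ⊆ f '' C (s n)` is realised by an orbit, by compactness. Such an `s` may climb
`i ↦ i + 1` or fall back `nseq j ↦ mseq j`. Choose levels `L n → ∞` so slowly that all `C i`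
with `i ≤ nseq (L n)` lie in the disc of radius `a n`, and let `s` climb, falling back from
`nseq (L n)` whenever it hits it. Then `s n ≤ nseq (L n)`, and `s n → ∞` because `mseq j → ∞`,
so the orbit escapes, slowly. Freezing the level after time `k` gives orbits that follow `s` up
to time `k` but stay bounded, so `ζ` is a limit of non-escaping points.
-/

open Function

section Itinerary

variable {X : Type*} {f : X → X} {C : ℕ → Set X} {σ : ℕ → ℕ}

def IsItinerary (f : X → X) (C : ℕ → Set X) (σ : ℕ → ℕ) : Prop :=
  ∀ n, C (σ (n + 1)) ⊆ f '' C (σ n)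

theorem IsItinerary.exists_iterate_eq (h : IsItinerary f C σ) {k : ℕ} {w : X}
    (hw : w ∈ C (σ k)) : ∃ z, f^[k] z = w ∧ ∀ i ≤ k, f^[i] z ∈ C (σ i) := by
  induction k generalizing w with
  | zero => exact ⟨w, rfl, fun i hi => by rwa [Nat.le_zero.1 hi]⟩
  | succ k ih =>
    obtain ⟨v, hv, rfl⟩ := h k hw
    obtain ⟨z, rfl, hz⟩ := ih hv
    refine ⟨z, iterate_succ_apply' f k z, fun i hi => ?_⟩
    rcases Nat.le_succ_iff.1 hi with hi | rfl
    · exact hz i hi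
    · rwa [iterate_succ_apply']

theorem exists_mem_forall_iterate_mem [TopologicalSpace X] [T2Space X] (hf : Continuous f)
    (hC : ∀ n, IsCompact (C n)) {E : Set X} (hE : IsClosed E)
    (h : ∀ k, ∃ z ∈ E, ∀ i ≤ k, f^[i] z ∈ C (σ i)) :
    ∃ z ∈ E, ∀ n, f^[n] z ∈ C (σ n) := by
  set K : ℕ → Set X := fun k => E ∩ ⋂ i ∈ Iic k, f^[i] ⁻¹' C (σ i)
  have hK : ∀ k, K k = {z | z ∈ E ∧ ∀ i ≤ k, f^[i] z ∈ C (σ i)} := fun k => by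
    ext z; simp [K]
  have hKclosed : ∀ k, IsClosed (K k) := fun k =>
    hE.inter (isClosed_biInter fun i _ => (hC (σ i)).isClosed.preimage (hf.iterate i))
  have hK0 : IsCompact (K 0) :=
    (hC (σ 0)).of_isClosed_subset (hKclosed 0) fun z hz => by
      rw [hK] at hz
      exact hz.2 0 le_rfl
  obtain ⟨z, hz⟩ := hK0.nonempty_iInter_of_sequence_nonempty_isCompact_isClosed K
    (fun k z hz => by rw [hK] at hz ⊢; exact ⟨hz.1, fun i hi => hz.2 i (by omega)⟩)
    (fun k => by rw [hK]; exact h k) hKclosed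
  simp only [mem_iInter, hK] at hz
  exact ⟨z, (hz 0).1, fun n => (hz n).2 n le_rfl⟩

theorem IsItinerary.exists_orbit [TopologicalSpace X] [T2Space X] (h : IsItinerary f C σ)
    (hf : Continuous f) (hC : ∀ n, IsCompact (C n)) (hne : ∀ n, (C n).Nonempty) :
    ∃ z, ∀ n, f^[n] z ∈ C (σ n) := by
  obtain ⟨z, -, hz⟩ := exists_mem_forall_iterate_mem hf hC isClosed_univ fun k =>
    let ⟨_, hw⟩ := hne (σ k)
    let ⟨z, _, hz⟩ := h.exists_iterate_eq hw
    ⟨z, mem_univ z, hz⟩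
  exact ⟨z, hz⟩

end Itinerary

section EscapingSet

variable {f : ℂ → ℂ} {z : ℂ}

theorem notMem_escapingSet_of_forall_iterate_mem {K : Set ℂ} (hK : Bornology.IsBounded K)
    (h : ∀ n, f^[n] z ∈ K) : z ∉ escapingSet f := fun hz =>
  let ⟨R, hR⟩ := isBounded_iff_forall_norm_le.1 hK
  not_bddAbove_of_tendsto_atTop hz ⟨R, forall_mem_range.2 fun n => hR _ (h n)⟩

theorem mem_escapingSet_of_forall_iterate_mem {C : ℕ → Set ℂ} {s : ℕ → ℕ}
    (hC : Tendsto (fun n => sInf ((fun w : ℂ => ‖w‖) '' C n)) atTop atTop)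
    (hs : Tendsto s atTop atTop) (h : ∀ n, f^[n] z ∈ C (s n)) : z ∈ escapingSet f :=
  tendsto_atTop_mono
    (fun n => csInf_le ⟨0, forall_mem_image.2 fun w _ => norm_nonneg w⟩ (mem_image_of_mem _ (h n)))
    (hC.comp hs)

end EscapingSet

theorem exists_monotone_tendsto_atTop_eventually_le {a : ℕ → ℝ} (ha : Tendsto a atTop atTop)
    (B : ℕ → ℝ) :
    ∃ L : ℕ → ℕ, Monotone L ∧ Tendsto L atTop atTop ∧ ∀ᶠ n in atTop, B (L n) ≤ a n := by
  classical
  set P : ℕ → ℕ → Prop := fun n j => ∀ m ≥ n, B j ≤ a m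
  have hP : ∀ j, ∀ᶠ n in atTop, P n j := fun j =>
    eventually_forall_ge_atTop.2 (ha.eventually_ge_atTop (B j))
  refine ⟨fun n => Nat.findGreatest (P n) n, fun n n' h =>
    Nat.findGreatest_mono (fun j hj m hm => hj m (h.trans hm)) h, ?_, ?_⟩
  · refine tendsto_atTop_atTop.2 fun J => ?_
    obtain ⟨T, hT⟩ := eventually_atTop.1 (hP J)
    exact ⟨max T J, fun n hn => Nat.le_findGreatest (le_of_max_le_right hn)
      (hT n (le_of_max_le_left hn))⟩
  · exact (hP 0).mono fun n hn => Nat.findGreatest_spec (Nat.zero_le n) hn n le_rfl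

theorem tendsto_atTop_of_min_succ_le {u v : ℕ → ℕ} (hv : Tendsto v atTop atTop)
    (huv : ∀ n, min (u n + 1) (v (n + 1)) ≤ u (n + 1)) : Tendsto u atTop atTop := by
  refine tendsto_atTop_atTop.2 fun K => ?_
  obtain ⟨T, hT⟩ := tendsto_atTop_atTop.1 hv K
  have key : ∀ d, min (u T + d) K ≤ u (T + d) := by
    intro d
    induction d with
    | zero => exact min_le_left _ _
    | succ d ih =>
      have := min_le_iff.1 (huv (T + d))
      have := hT (T + d + 1) (by omega)
      show min (u T + (d + 1)) K ≤ u (T + d + 1)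
      omega
  refine ⟨T + K, fun n hn => ?_⟩
  have := key (n - T)
  rw [Nat.add_sub_cancel' (by omega)] at this
  omega

def stallingPath (nseq mseq L : ℕ → ℕ) : ℕ → ℕ
  | 0 => 0
  | n + 1 =>
    if stallingPath nseq mseq L n < nseq (L (n + 1)) then stallingPath nseq mseq L n + 1
    else mseq (L (n + 1))

section StallingPath

variable {nseq mseq L L' : ℕ → ℕ}

theorem stallingPath_le (hmn : ∀ j, mseq j ≤ nseq j) (hn : Monotone nseq) (hL : Monotone L)
    (n : ℕ) : stallingPath nseq mseq L n ≤ nseq (L n) := by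
  induction n with
  | zero => exact Nat.zero_le _
  | succ n ih =>
    have := hn (hL (Nat.le_add_right n 1))
    simp only [stallingPath]
    split_ifs with h
    · omega
    · exact hmn _

theorem stallingPath_succ (hmn : ∀ j, mseq j ≤ nseq j) (hn : Monotone nseq) (hL : Monotone L)
    (n : ℕ) :
    stallingPath nseq mseq L (n + 1) = stallingPath nseq mseq L n + 1 ∨
      stallingPath nseq mseq L n = nseq (L (n + 1)) ∧
        stallingPath nseq mseq L (n + 1) = mseq (L (n + 1)) := by
  have := (stallingPath_le hmn hn hL n).trans (hn (hL (Nat.le_add_right n 1)))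
  simp only [stallingPath]
  split_ifs with h
  · exact Or.inl rfl
  · exact Or.inr ⟨by omega, rfl⟩

theorem stallingPath_eq_of_forall_le {k : ℕ} (h : ∀ i ≤ k, L i = L' i) :
    ∀ i ≤ k, stallingPath nseq mseq L i = stallingPath nseq mseq L' i := by
  intro i hi
  induction i with
  | zero => rfl
  | succ i ih => simp only [stallingPath, ih (by omega), h (i + 1) hi]

theorem tendsto_stallingPath (hL : Tendsto L atTop atTop) (hm : Tendsto mseq atTop atTop) :
    Tendsto (stallingPath nseq mseq L) atTop atTop :=
  tendsto_atTop_of_min_succ_le (v := mseq ∘ L) (hm.comp hL) fun n => by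
    simp only [stallingPath, comp_apply]
    split_ifs <;> omega

theorem isItinerary_stallingPath {X : Type*} {f : X → X} {C : ℕ → Set X}
    (hcov : ∀ n, C (n + 1) ⊆ f '' C n) (hcov2 : ∀ j, C (mseq j) ⊆ f '' C (nseq j))
    (hmn : ∀ j, mseq j ≤ nseq j) (hn : Monotone nseq) (hL : Monotone L) :
    IsItinerary f C (stallingPath nseq mseq L) := fun n => by
  rcases stallingPath_succ hmn hn hL n with h | ⟨h, h'⟩
  · rw [h]; exact hcov _
  · rw [h, h']; exact hcov2 _

end StallingPath

section Recipe

variable {f : ℂ → ℂ} {C : ℕ → Set ℂ} {nseq mseq L : ℕ → ℕ}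

theorem exists_notMem_escapingSet_stallingPath (hf : Continuous f) (hC : ∀ n, IsCompact (C n))
    (hne : ∀ n, (C n).Nonempty) (hcov : ∀ n, C (n + 1) ⊆ f '' C n)
    (hcov2 : ∀ j, C (mseq j) ⊆ f '' C (nseq j)) (hmn : ∀ j, mseq j ≤ nseq j)
    (hn : Monotone nseq) (hL : Monotone L) (k : ℕ) :
    ∃ z ∉ escapingSet f, ∀ i ≤ k, f^[i] z ∈ C (stallingPath nseq mseq L i) := by
  set Lk : ℕ → ℕ := fun n => L (min n k)
  have hLk : Monotone Lk := hL.comp fun _ _ h => min_le_min_right k h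
  obtain ⟨z, hz⟩ := (isItinerary_stallingPath hcov hcov2 hmn hn hLk).exists_orbit hf hC hne
  refine ⟨z, notMem_escapingSet_of_forall_iterate_mem (K := ⋃ i ∈ Iic (nseq (L k)), C i)
    ((Bornology.isBounded_biUnion (finite_Iic _)).2 fun i _ => (hC i).isBounded)
    fun n => mem_biUnion ((stallingPath_le hmn hn hLk n).trans (hn (hL (min_le_right n k))))
      (hz n), fun i hi => ?_⟩
  rw [stallingPath_eq_of_forall_le (L' := Lk) (fun i hi => by simp [Lk, hi]) i hi]
  exact hz i

theorem exists_notMem_interior_escapingSet_stallingPath (hf : Continuous f)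
    (hC : ∀ n, IsCompact (C n)) (hne : ∀ n, (C n).Nonempty) (hcov : ∀ n, C (n + 1) ⊆ f '' C n)
    (hcov2 : ∀ j, C (mseq j) ⊆ f '' C (nseq j)) (hmn : ∀ j, mseq j ≤ nseq j)
    (hn : Monotone nseq) (hL : Monotone L) :
    ∃ ζ ∉ interior (escapingSet f), ∀ n, f^[n] ζ ∈ C (stallingPath nseq mseq L n) := by
  obtain ⟨ζ, hζ, horbit⟩ :=
    exists_mem_forall_iterate_mem hf hC (isClosed_closure (s := (escapingSet f)ᶜ)) fun k =>
      let ⟨z, hz, hzk⟩ := exists_notMem_escapingSet_stallingPath hf hC hne hcov hcov2 hmn hn hL k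
      ⟨z, subset_closure hz, hzk⟩
  rw [closure_compl] at hζ
  exact ⟨ζ, hζ, horbit⟩

end Recipe

theorem slow_escape_recipe_general
    (f : ℂ → ℂ) (hf : TranscendentalEntire f)
    (D : Set ℂ)
    (S : ℕ → Set ℂ)
    (hSne : ∀ n, (S n).Nonempty) (hSbdd : ∀ n, Bornology.IsBounded (S n))
    (hSsub : ∀ n, S n ⊆ D)
    (hmin : Tendsto (fun n => sInf ((fun z : ℂ => ‖z‖) '' closure (S n))) atTop atTop)
    (hcov : ∀ n : ℕ, closure (S (n + 1)) ⊆ f '' closure (S n))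
    (nseq mseq : ℕ → ℕ) (hn : StrictMono nseq)
    (hmn : ∀ j, mseq j ≤ nseq j) (hmtop : Tendsto mseq atTop atTop)
    (hcov2 : ∀ j : ℕ, closure (S (mseq j)) ⊆ f '' closure (S (nseq j)))
    (a : ℕ → ℝ) (ha : Tendsto a atTop atTop) :
    ∃ (ζ : ℂ) (N : ℕ),
      ζ ∈ closure D ∧
      (∀ n : ℕ, 1 ≤ n → f^[n] ζ ∈ closure D) ∧
      ζ ∈ escapingSet f ∧
      ζ ∉ interior (escapingSet f) ∧
      ∀ n : ℕ, N ≤ n → ‖f^[n] ζ‖ ≤ a n := by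
  set C : ℕ → Set ℂ := fun n => closure (S n)
  have hC : ∀ n, IsCompact (C n) := fun n => (hSbdd n).isCompact_closure
  have hCD : ∀ n, C n ⊆ closure D := fun n => closure_mono (hSsub n)
  choose R hR using fun k => isBounded_iff_forall_norm_le.1
    ((Bornology.isBounded_biUnion (finite_Iic k)).2 fun i _ => (hC i).isBounded)
  obtain ⟨L, hLmono, hLtop, hLa⟩ := exists_monotone_tendsto_atTop_eventually_le ha (R ∘ nseq)
  obtain ⟨N, hN⟩ := eventually_atTop.1 hLa
  obtain ⟨ζ, hζJ, hζ⟩ := exists_notMem_interior_escapingSet_stallingPath hf.1.continuous hC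
    (fun n => (hSne n).closure) hcov hcov2 hmn hn.monotone hLmono
  refine ⟨ζ, N, hCD _ (hζ 0), fun n _ => hCD _ (hζ n),
    mem_escapingSet_of_forall_iterate_mem hmin (tendsto_stallingPath hLtop hmtop) hζ, hζJ,
    fun n hNn => (hR _ _ (mem_biUnion ?_ (hζ n))).trans (hN n hNn)⟩
  exact stallingPath_le hmn hn.monotone hLmono n

/-- **Theorem 2.3.** A general recipe for constructing slow escaping points. -/
theorem slow_escape_recipe
    (f : ℂ → ℂ) (hf : TranscendentalEntire f)
    (D : Set ℂ) (hDopen : IsOpen D) (hDconn : IsConnected D)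
    (hDunb : ¬Bornology.IsBounded D)
    (S : ℕ → Set ℂ) (hSinj : Function.Injective S)
    (hSne : ∀ n, (S n).Nonempty) (hSbdd : ∀ n, Bornology.IsBounded (S n))
    (hSopen : ∀ n, IsOpen (S n)) (hSsub : ∀ n, S n ⊆ D)
    (hmin : Tendsto (fun n => sInf ((fun z : ℂ => ‖z‖) '' closure (S n))) atTop atTop)
    (hcov : ∀ n : ℕ, closure (S (n + 1)) ⊆ f '' closure (S n))
    (nseq mseq : ℕ → ℕ) (hn : StrictMono nseq) (hm : StrictMono mseq)
    (hmn : ∀ j, mseq j ≤ nseq j) (hmtop : Tendsto mseq atTop atTop)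
    (hcov2 : ∀ j : ℕ, closure (S (mseq j)) ⊆ f '' closure (S (nseq j)))
    (a : ℕ → ℝ) (hapos : ∀ n, 0 < a n) (ha : Tendsto a atTop atTop) :
    ∃ (ζ : ℂ) (N : ℕ),
      ζ ∈ closure D ∧
      (∀ n : ℕ, 1 ≤ n → f^[n] ζ ∈ closure D) ∧
      ζ ∈ escapingSet f ∧
      ζ ∉ interior (escapingSet f) ∧
      ∀ n : ℕ, N ≤ n → ‖f^[n] ζ‖ ≤ a n :=
  slow_escape_recipe_general f hf D S hSne hSbdd hSsub hmin hcov nseq mseq hn hmn hmtop hcov2 a ha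
end
end
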